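/- arXiv:1706.00088 — 4 statements merged into one kernel-verified Lean document; each statement's English description precedes it below -/
import Mathlib

section
/- Let {V_k} be a sequence of nonnegative real numbers satisfying V_{k+1} ≤ r·V_k + q·max_{k-τ ≤ l ≤ k} V_l for all k ≥ 0, where r, q ≥ 0 and τ ∈ ℕ. If r + q < 1, then V_k ≤ s^k · V_0 for all k ≥ 1, where s = (r+q)^{1/(1+τ)}. -/
theorem stmt_0 (V : ℕ → ℝ) (hV : ∀ k, 0 ≤ V k) (r q : ℝ) (hr : 0 ≤ r) (hq : 0 ≤ q)
    (τ : ℕ)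
    (hrec : ∀ k, V (k + 1) ≤ r * V k +
      q * (Finset.Icc (k - τ) k).sup' (Finset.nonempty_Icc.mpr (by omega)) V)
    (hsum : r + q < 1) :
    ∀ k ≥ 1, V k ≤ ((r + q) ^ ((1 : ℝ) / (1 + (τ : ℝ)))) ^ k * V 0 := by
  set s : ℝ := (r + q) ^ ((1 : ℝ) / (1 + (τ : ℝ))) with hsdef
  have hrq : 0 ≤ r + q := by linarith
  have hs0 : 0 ≤ s := Real.rpow_nonneg hrq _
  have hτ : (1 : ℝ) + (τ : ℝ) ≠ 0 := by positivity
  have hs1 : s ≤ 1 := Real.rpow_le_one hrq (le_of_lt hsum) (by positivity)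
  have hspow : s ^ (τ + 1) = r + q := by
    rw [hsdef, ← Real.rpow_natCast ((r + q) ^ ((1 : ℝ) / (1 + (τ : ℝ)))) (τ + 1),
      ← Real.rpow_mul hrq]
    have : (1 : ℝ) / (1 + (τ : ℝ)) * ((τ + 1 : ℕ) : ℝ) = 1 := by
      push_cast
      field_simp
      ring
    rw [this, Real.rpow_one]
  have key : ∀ k, V k ≤ s ^ k * V 0 := by
    intro k
    induction k using Nat.strong_induction_on with
    | _ k ih =>
      match k with
      | 0 => simp
      | Nat.succ k =>
        have hsup : (Finset.Icc (k - τ) k).sup'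
            (Finset.nonempty_Icc.mpr (by omega)) V ≤ s ^ (k - τ) * V 0 := by
          apply Finset.sup'_le
          intro l hl
          rw [Finset.mem_Icc] at hl
          calc V l ≤ s ^ l * V 0 := ih l (by omega)
            _ ≤ s ^ (k - τ) * V 0 :=
              mul_le_mul_of_nonneg_right (pow_le_pow_of_le_one hs0 hs1 hl.1) (hV 0)
        have h1 : V (k + 1) ≤ r * (s ^ k * V 0) + q * (s ^ (k - τ) * V 0) := by
          refine le_trans (hrec k) ?_
          gcongr
          exact ih k (by omega)
        have h2 : r * (s ^ k * V 0) + q * (s ^ (k - τ) * V 0)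
            ≤ (r + q) * (s ^ (k - τ) * V 0) := by
          have h : s ^ k ≤ s ^ (k - τ) := pow_le_pow_of_le_one hs0 hs1 (by omega)
          have h' := mul_le_mul_of_nonneg_left (mul_le_mul_of_nonneg_right h (hV 0)) hr
          rw [add_mul]
          linarith
        have h3 : (r + q) * (s ^ (k - τ) * V 0) = s ^ ((τ + 1) + (k - τ)) * V 0 := by
          rw [pow_add, hspow]; ring
        have h4 : s ^ ((τ + 1) + (k - τ)) * V 0 ≤ s ^ (k + 1) * V 0 :=
          mul_le_mul_of_nonneg_right (pow_le_pow_of_le_one hs0 hs1 (by omega)) (hV 0)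
        calc V (k + 1) ≤ r * (s ^ k * V 0) + q * (s ^ (k - τ) * V 0) := h1
          _ ≤ (r + q) * (s ^ (k - τ) * V 0) := h2
          _ = s ^ ((τ + 1) + (k - τ)) * V 0 := h3
          _ ≤ s ^ (k + 1) * V 0 := h4
  intro k _
  exact key k
end

section
/- Let H be a real Hilbert space, T_A : H → H nonexpansive, B : H → H both (1/L)-cocoercive and μ-strongly monotone with L, μ > 0, and γ ∈ (0, 2/L). Let T = T_A ∘ (I - γB) and suppose x_* is a fixed point of T. Then for all x ∈ H, ‖Tx - Tx_*‖ ≤ √(1 - 2γμ + μγ²L) · ‖x - x_*‖. -/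
/-!
Cocoercivity gives `γ²‖Bx - By‖² ≤ γ²L⟨x - y, Bx - By⟩`, so the forward step `I - γB` satisfies
`‖(I - γB)x - (I - γB)y‖² ≤ ‖x - y‖² - γ(2 - γL)⟨x - y, Bx - By⟩`. As `γL < 2`, strong
monotonicity bounds the last term by `γ(2 - γL)μ‖x - y‖²`, so `I - γB` is Lipschitz with constant
`√(1 - 2γμ + μγ²L)`, and composing with the nonexpansive `T_A` keeps that constant.
-/

theorem Real.le_sqrt_mul_of_sq_le {a b c : ℝ} (hb : 0 ≤ b) (h : a ^ 2 ≤ c * b ^ 2) :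
    a ≤ Real.sqrt c * b := by
  calc a ≤ |a| := le_abs_self a
    _ ≤ Real.sqrt (c * b ^ 2) := Real.abs_le_sqrt h
    _ = Real.sqrt c * b := by rw [Real.sqrt_mul' c (sq_nonneg b), Real.sqrt_sq hb]

section ForwardStep

open RealInnerProductSpace

variable {H : Type*} [NormedAddCommGroup H] [InnerProductSpace ℝ H]

theorem norm_sub_smul_sq_le_of_cocoercive_of_strongly_monotone {d e : H} {L μ γ : ℝ}
    (hL : 0 < L) (hγ : 0 ≤ γ) (hγL : γ * L ≤ 2)
    (hcoco : ⟪d, e⟫ ≥ (1 / L) * ‖e‖ ^ 2) (hmono : ⟪d, e⟫ ≥ μ * ‖d‖ ^ 2) :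
    ‖d - γ • e‖ ^ 2 ≤ (1 - 2 * γ * μ + μ * γ ^ 2 * L) * ‖d‖ ^ 2 := by
  have hexpand : ‖d - γ • e‖ ^ 2 = ‖d‖ ^ 2 - 2 * γ * ⟪d, e⟫ + γ ^ 2 * ‖e‖ ^ 2 := by
    rw [norm_sub_sq_real, real_inner_smul_right, norm_smul, Real.norm_of_nonneg hγ]
    ring
  have he : ‖e‖ ^ 2 ≤ L * ⟪d, e⟫ := by
    have := mul_le_mul_of_nonneg_left hcoco hL.le
    rwa [← mul_assoc, mul_one_div_cancel hL.ne', one_mul] at this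
  have hstep : 0 ≤ γ * (2 - γ * L) := mul_nonneg hγ (by linarith)
  calc ‖d - γ • e‖ ^ 2
      ≤ ‖d‖ ^ 2 - γ * (2 - γ * L) * ⟪d, e⟫ := by
        rw [hexpand]
        nlinarith [mul_le_mul_of_nonneg_left he (sq_nonneg γ)]
    _ ≤ ‖d‖ ^ 2 - γ * (2 - γ * L) * (μ * ‖d‖ ^ 2) := by
        gcongr
    _ = (1 - 2 * γ * μ + μ * γ ^ 2 * L) * ‖d‖ ^ 2 := by ring

theorem norm_forwardStep_sub_le {B : H → H} {L μ γ : ℝ} (hL : 0 < L)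
    (hcoco : ∀ x y, ⟪x - y, B x - B y⟫ ≥ (1 / L) * ‖B x - B y‖ ^ 2)
    (hmono : ∀ x y, ⟪x - y, B x - B y⟫ ≥ μ * ‖x - y‖ ^ 2)
    (hγ : 0 ≤ γ) (hγL : γ * L ≤ 2) (x y : H) :
    ‖(x - γ • B x) - (y - γ • B y)‖ ≤ Real.sqrt (1 - 2 * γ * μ + μ * γ ^ 2 * L) * ‖x - y‖ := by
  have hsplit : (x - γ • B x) - (y - γ • B y) = (x - y) - γ • (B x - B y) := by
    rw [smul_sub]; abel
  rw [hsplit]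
  exact Real.le_sqrt_mul_of_sq_le (norm_nonneg _) <|
    norm_sub_smul_sq_le_of_cocoercive_of_strongly_monotone hL hγ hγL (hcoco x y) (hmono x y)

end ForwardStep

theorem stmt_4_general {H : Type*} [NormedAddCommGroup H] [InnerProductSpace ℝ H]
    (TA B : H → H) (L μ γ : ℝ) (hL : 0 < L)
    (hTA : ∀ x y, ‖TA x - TA y‖ ≤ ‖x - y‖)
    (hB : ∀ x y, (inner ℝ (x - y) (B x - B y) : ℝ) ≥ (1 / L) * ‖B x - B y‖ ^ 2)
    (hBmono : ∀ x y, (inner ℝ (x - y) (B x - B y) : ℝ) ≥ μ * ‖x - y‖ ^ 2)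
    (hγ : 0 < γ) (hγ2 : γ < 2 / L)
    (xstar : H) :
    ∀ x, ‖TA (x - γ • B x) - TA (xstar - γ • B xstar)‖ ≤
      Real.sqrt (1 - 2 * γ * μ + μ * γ ^ 2 * L) * ‖x - xstar‖ := by
  intro x
  have hγL : γ * L ≤ 2 := ((lt_div_iff₀ hL).mp hγ2).le
  exact (hTA _ _).trans (norm_forwardStep_sub_le hL hB hBmono hγ.le hγL x xstar)

theorem stmt_4 {H : Type*} [NormedAddCommGroup H] [InnerProductSpace ℝ H] [CompleteSpace H]
    (TA B : H → H) (L μ γ : ℝ) (hL : 0 < L) (hμ : 0 < μ)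
    (hTA : ∀ x y, ‖TA x - TA y‖ ≤ ‖x - y‖)
    (hB : ∀ x y, (inner ℝ (x - y) (B x - B y) : ℝ) ≥ (1 / L) * ‖B x - B y‖ ^ 2)
    (hBmono : ∀ x y, (inner ℝ (x - y) (B x - B y) : ℝ) ≥ μ * ‖x - y‖ ^ 2)
    (hγ : 0 < γ) (hγ2 : γ < 2 / L)
    (xstar : H) (hfix : TA (xstar - γ • B xstar) = xstar) :
    ∀ x, ‖TA (x - γ • B x) - TA (xstar - γ • B xstar)‖ ≤
      Real.sqrt (1 - 2 * γ * μ + μ * γ ^ 2 * L) * ‖x - xstar‖ :=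
  stmt_4_general TA B L μ γ hL hTA hB hBmono hγ hγ2 xstar
end

section
/- Let H be a real Hilbert space, S : H → H an operator, x_* ∈ H with Sx_* = 0, and suppose S is (1/2)-cocoercive and quasi-ν-strongly monotone at x_* for some ν > 0. Let x_{k+1} = x_k - η(Sx_k - e_k) for some error e_k ∈ H and η > 0. Then for any δ > 0 and ε ∈ (0, ν), if η < 1/(2(1+δ)), we have ‖x_{k+1} - x_*‖² ≤ (1 - η(ν - ε))‖x_k - x_*‖² + η(1/ε + η(1+δ)/δ)‖e_k‖². -/
/-!
Expand ‖(x - x_*) - η (Sx - e)‖². Cocoercivity at the zero x_* gives ‖Sx‖² ≤ 2⟨x - x_*, Sx⟩, so after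
splitting ‖Sx - e‖² by Young's inequality the term η²‖Sx‖² costs at most half of the descent term
-2η⟨x - x_*, Sx⟩ (this is where η(1 + δ) < 1/2 enters). The remaining descent -η⟨x - x_*, Sx⟩ is at most
-ην‖x - x_*‖² by quasi-strong monotonicity, and Young's inequality with weight ε absorbs the cross term
2η⟨x - x_*, e⟩.
-/

theorem norm_sub_sq_le_mul_sq_add {E : Type*} [SeminormedAddCommGroup E] {δ : ℝ} (hδ : 0 < δ)
    (u e : E) :
    ‖u - e‖ ^ 2 ≤ (1 + δ) * ‖u‖ ^ 2 + (1 + δ⁻¹) * ‖e‖ ^ 2 :=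
  calc ‖u - e‖ ^ 2 ≤ (‖u‖ + ‖e‖) ^ 2 := by gcongr; exact norm_sub_le u e
    _ = ‖u‖ ^ 2 + 2 * ‖u‖ * ‖e‖ + ‖e‖ ^ 2 := by ring
    _ ≤ ‖u‖ ^ 2 + (δ * ‖u‖ ^ 2 + δ⁻¹ * ‖e‖ ^ 2) + ‖e‖ ^ 2 := by
        gcongr; exact two_mul_le_add_mul_sq hδ
    _ = (1 + δ) * ‖u‖ ^ 2 + (1 + δ⁻¹) * ‖e‖ ^ 2 := by ring

section InnerProductSpace

variable {H : Type*} [NormedAddCommGroup H] [InnerProductSpace ℝ H]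

theorem norm_sub_smul_sq_real (a v : H) (η : ℝ) :
    ‖a - η • v‖ ^ 2 = ‖a‖ ^ 2 - 2 * η * inner ℝ a v + η ^ 2 * ‖v‖ ^ 2 := by
  rw [norm_sub_sq_real, real_inner_smul_right, norm_smul, mul_pow, Real.norm_eq_abs, sq_abs]
  ring

theorem two_mul_inner_le_mul_sq_add {ε : ℝ} (hε : 0 < ε) (a b : H) :
    2 * inner ℝ a b ≤ ε * ‖a‖ ^ 2 + ε⁻¹ * ‖b‖ ^ 2 :=
  calc 2 * inner ℝ a b ≤ 2 * ‖a‖ * ‖b‖ := by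
        rw [mul_assoc]; exact mul_le_mul_of_nonneg_left (real_inner_le_norm a b) zero_le_two
    _ ≤ ε * ‖a‖ ^ 2 + ε⁻¹ * ‖b‖ ^ 2 := two_mul_le_add_mul_sq hε

theorem norm_sq_le_two_inner_of_cocoercive {S : H → H} {xstar : H} (hfix : S xstar = 0)
    (hcoco : ∀ x y, inner ℝ (x - y) (S x - S y) ≥ (1 / 2) * ‖S x - S y‖ ^ 2) (x : H) :
    ‖S x‖ ^ 2 ≤ 2 * inner ℝ (x - xstar) (S x) := by
  have h := hcoco x xstar
  rw [hfix, sub_zero] at h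
  linarith

theorem norm_sub_smul_sub_sq_le {a u e : H} {η δ ε : ℝ} (hη : 0 ≤ η) (hδ : 0 < δ) (hε : 0 < ε)
    (hu : ‖u‖ ^ 2 ≤ 2 * inner ℝ a u) :
    ‖a - η • (u - e)‖ ^ 2 ≤ ‖a‖ ^ 2 - 2 * η * (1 - η * (1 + δ)) * inner ℝ a u
      + η * ε * ‖a‖ ^ 2 + η * (ε⁻¹ + η * (1 + δ) / δ) * ‖e‖ ^ 2 := by
  have hcross := mul_le_mul_of_nonneg_left (two_mul_inner_le_mul_sq_add hε a e) hη
  have hsplit := mul_le_mul_of_nonneg_left (norm_sub_sq_le_mul_sq_add hδ u e) (sq_nonneg η)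
  have hu' := mul_le_mul_of_nonneg_left hu (by positivity : 0 ≤ η ^ 2 * (1 + δ))
  rw [norm_sub_smul_sq_real, inner_sub_right]
  calc ‖a‖ ^ 2 - 2 * η * (inner ℝ a u - inner ℝ a e) + η ^ 2 * ‖u - e‖ ^ 2
      ≤ ‖a‖ ^ 2 - 2 * η * inner ℝ a u + η * (ε * ‖a‖ ^ 2 + ε⁻¹ * ‖e‖ ^ 2)
          + η ^ 2 * ((1 + δ) * (2 * inner ℝ a u) + (1 + δ⁻¹) * ‖e‖ ^ 2) := by linarith
    _ = ‖a‖ ^ 2 - 2 * η * (1 - η * (1 + δ)) * inner ℝ a u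
          + η * ε * ‖a‖ ^ 2 + η * (ε⁻¹ + η * (1 + δ) / δ) * ‖e‖ ^ 2 := by
        field_simp; ring

end InnerProductSpace

theorem stmt_8_general {H : Type*} [NormedAddCommGroup H] [InnerProductSpace ℝ H]
    (S : H → H) (xstar : H) (hfix : S xstar = 0) (ν : ℝ)
    (hcoco : ∀ x y, (inner ℝ (x - y) (S x - S y) : ℝ) ≥ (1 / 2) * ‖S x - S y‖ ^ 2)
    (hquasi : ∀ x, (inner ℝ (x - xstar) (S x) : ℝ) ≥ ν * ‖x - xstar‖ ^ 2)
    (η δ ε : ℝ) (hη : 0 < η) (hδ : 0 < δ) (hε : 0 < ε)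
    (hηb : η < 1 / (2 * (1 + δ)))
    (xk ek : H) :
    ‖(xk - η • (S xk - ek)) - xstar‖ ^ 2 ≤
      (1 - η * (ν - ε)) * ‖xk - xstar‖ ^ 2 +
        η * (1 / ε + η * (1 + δ) / δ) * ‖ek‖ ^ 2 := by
  have hstep : (xk - η • (S xk - ek)) - xstar = (xk - xstar) - η • (S xk - ek) := by abel
  have hSx := norm_sq_le_two_inner_of_cocoercive hfix hcoco xk
  have hpos : 0 ≤ inner ℝ (xk - xstar) (S xk) := by linarith [sq_nonneg ‖S xk‖]
  have hstep_size : 2 * η * (1 + δ) < 1 := by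
    rw [lt_div_iff₀ (by positivity)] at hηb; linarith
  have hdescent :
      η * (ν * ‖xk - xstar‖ ^ 2) ≤ 2 * η * (1 - η * (1 + δ)) * inner ℝ (xk - xstar) (S xk) := by
    have hslack := mul_nonneg (mul_nonneg hη.le (by linarith : 0 ≤ 1 - 2 * η * (1 + δ))) hpos
    linarith [mul_le_mul_of_nonneg_left (hquasi xk) hη.le]
  rw [hstep]
  grw [norm_sub_smul_sub_sq_le hη.le hδ hε hSx]
  rw [one_div]
  linarith

theorem stmt_8 {H : Type*} [NormedAddCommGroup H] [InnerProductSpace ℝ H] [CompleteSpace H]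
    (S : H → H) (xstar : H) (hfix : S xstar = 0) (ν : ℝ) (hν : 0 < ν)
    (hcoco : ∀ x y, (inner ℝ (x - y) (S x - S y) : ℝ) ≥ (1 / 2) * ‖S x - S y‖ ^ 2)
    (hquasi : ∀ x, (inner ℝ (x - xstar) (S x) : ℝ) ≥ ν * ‖x - xstar‖ ^ 2)
    (η δ ε : ℝ) (hη : 0 < η) (hδ : 0 < δ) (hε : 0 < ε) (hεν : ε < ν)
    (hηb : η < 1 / (2 * (1 + δ)))
    (xk ek : H) :
    ‖(xk - η • (S xk - ek)) - xstar‖ ^ 2 ≤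
      (1 - η * (ν - ε)) * ‖xk - xstar‖ ^ 2 +
        η * (1 / ε + η * (1 + δ) / δ) * ‖ek‖ ^ 2 :=
  stmt_8_general S xstar hfix ν hcoco hquasi η δ ε hη hδ hε hηb xk ek
end

section
/- Let H be a real Hilbert space, S : H → H with Sx_* = 0 and S (1/2)-cocoercive and quasi-ν-strongly monotone at x_*, and let x_{k+1} = x_k - η(Sx_k - e_k) with η > 0. Then ‖x_{k+1} - x_*‖² ≤ (1 - ην)‖x_k - x_*‖² + η(-1/2 + η(1+δ))‖Sx_k‖² + 2η‖x_k - x_*‖‖e_k‖ + η²((δ+1)/δ)‖e_k‖² for any δ > 0. -/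
/-!
Write `u = x_k - x_*`, so that `x_{k+1} - x_* = u - η (S x_k - e_k)`. Expanding the square, the
cross term `-2η⟪u, S x_k⟫` is split in two halves, one bounded by quasi-strong monotonicity and
the other by cocoercivity; the error enters through Cauchy–Schwarz in `2η⟪u, e_k⟫` and through
Young's inequality with parameter `δ` in `η²‖S x_k - e_k‖²`.
-/

open RealInnerProductSpace

theorem norm_sub_sq_le_of_pos {E : Type*} [SeminormedAddCommGroup E] (a b : E) {δ : ℝ}
    (hδ : 0 < δ) :
    ‖a - b‖ ^ 2 ≤ (1 + δ) * ‖a‖ ^ 2 + (δ + 1) / δ * ‖b‖ ^ 2 := by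
  have hyoung : 2 * ‖a‖ * ‖b‖ ≤ δ * ‖a‖ ^ 2 + δ⁻¹ * ‖b‖ ^ 2 := two_mul_le_add_mul_sq hδ
  have hsplit : (δ + 1) / δ = 1 + δ⁻¹ := by field_simp
  calc ‖a - b‖ ^ 2 ≤ (‖a‖ + ‖b‖) ^ 2 := by gcongr; exact norm_sub_le a b
    _ ≤ (1 + δ) * ‖a‖ ^ 2 + (δ + 1) / δ * ‖b‖ ^ 2 := by rw [hsplit]; nlinarith

theorem norm_sub_smul_sub_sq_le_s9 {H : Type*} [NormedAddCommGroup H] [InnerProductSpace ℝ H]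
    {u v e : H} {ν η δ : ℝ} (hη : 0 ≤ η) (hδ : 0 < δ)
    (hcoco : 1 / 2 * ‖v‖ ^ 2 ≤ ⟪u, v⟫) (hquasi : ν * ‖u‖ ^ 2 ≤ ⟪u, v⟫) :
    ‖u - η • (v - e)‖ ^ 2 ≤
      (1 - η * ν) * ‖u‖ ^ 2 + η * (-(1 / 2) + η * (1 + δ)) * ‖v‖ ^ 2 +
        2 * η * ‖u‖ * ‖e‖ + η ^ 2 * ((δ + 1) / δ) * ‖e‖ ^ 2 := by
  have hexpand : ‖u - η • (v - e)‖ ^ 2 =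
      ‖u‖ ^ 2 - 2 * η * ⟪u, v⟫ + 2 * η * ⟪u, e⟫ + η ^ 2 * ‖v - e‖ ^ 2 := by
    rw [norm_sub_sq_real, real_inner_smul_right, inner_sub_right, norm_smul, mul_pow,
      Real.norm_eq_abs, sq_abs]
    ring
  have hcs : ⟪u, e⟫ ≤ ‖u‖ * ‖e‖ := real_inner_le_norm u e
  have hyoung := norm_sub_sq_le_of_pos v e hδ
  rw [hexpand]
  nlinarith [mul_le_mul_of_nonneg_left hcoco hη, mul_le_mul_of_nonneg_left hquasi hη,
    mul_le_mul_of_nonneg_left hcs hη, mul_le_mul_of_nonneg_left hyoung (sq_nonneg η)]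

theorem stmt_9_general {H : Type*} [NormedAddCommGroup H] [InnerProductSpace ℝ H]
    (S : H → H) (xstar : H) (ν : ℝ)
    (hcoco : ∀ x, (inner ℝ (x - xstar) (S x) : ℝ) ≥ (1 / 2) * ‖S x‖ ^ 2)
    (hquasi : ∀ x, (inner ℝ (x - xstar) (S x) : ℝ) ≥ ν * ‖x - xstar‖ ^ 2)
    (η δ : ℝ) (hη : 0 < η) (hδ : 0 < δ)
    (xk ek : H) :
    ‖(xk - η • (S xk - ek)) - xstar‖ ^ 2 ≤
      (1 - η * ν) * ‖xk - xstar‖ ^ 2 +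
        η * (-(1 / 2) + η * (1 + δ)) * ‖S xk‖ ^ 2 +
        2 * η * ‖xk - xstar‖ * ‖ek‖ +
        η ^ 2 * ((δ + 1) / δ) * ‖ek‖ ^ 2 := by
  rw [sub_right_comm]
  exact norm_sub_smul_sub_sq_le_s9 hη.le hδ (hcoco xk) (hquasi xk)

theorem stmt_9 {H : Type*} [NormedAddCommGroup H] [InnerProductSpace ℝ H] [CompleteSpace H]
    (S : H → H) (xstar : H) (hfix : S xstar = 0) (ν : ℝ) (hν : 0 < ν)
    (hcoco : ∀ x, (inner ℝ (x - xstar) (S x) : ℝ) ≥ (1 / 2) * ‖S x‖ ^ 2)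
    (hquasi : ∀ x, (inner ℝ (x - xstar) (S x) : ℝ) ≥ ν * ‖x - xstar‖ ^ 2)
    (η δ : ℝ) (hη : 0 < η) (hδ : 0 < δ)
    (xk ek : H) :
    ‖(xk - η • (S xk - ek)) - xstar‖ ^ 2 ≤
      (1 - η * ν) * ‖xk - xstar‖ ^ 2 +
        η * (-(1 / 2) + η * (1 + δ)) * ‖S xk‖ ^ 2 +
        2 * η * ‖xk - xstar‖ * ‖ek‖ +
        η ^ 2 * ((δ + 1) / δ) * ‖ek‖ ^ 2 :=
  stmt_9_general S xstar ν hcoco hquasi η δ hη hδ xk ek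
end
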